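/- arXiv:cs/0304004 — 8 statements merged into one kernel-verified Lean document; each statement's English description precedes it below -/
import Mathlib

section
/- For every quaternion x ∈ ℍ (over the reals, with imaginary units i, j, k), the expression x·x·i·x·i + i·x·x·i·x − i·x·i·x·x − x·i·x·x·i equals 0. In particular, this nonzero-looking quaternion polynomial expression vanishes identically on ℍ. -/
/-!
The expression is linear in `x * x`, and vanishes identically when `x * x` is replaced by `x`,
and also when it is replaced by `1`, since `i * i = -1` commutes with `x`. Every quaternion
satisfies `x * x = 2 re(x) x - |x|²`, a combination of these two.
-/

open Quaternion

/-- The quaternion imaginary unit `i`. -/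
def qi : ℍ[ℝ] := ⟨0, 1, 0, 0⟩

theorem quintic_identity_of_mul_self_eq {R A : Type*} [CommRing R] [Ring A] [Algebra R A]
    {x y : A} {a b : R} (hx : x * x = a • x - algebraMap R A b) (hy : Commute (y * y) x) :
    x * x * y * x * y + y * x * x * y * x - y * x * y * x * x - x * y * x * x * y = 0 := by
  have hy' : y * (y * x) = x * (y * y) := by rw [← mul_assoc, hy.eq]
  calc x * x * y * x * y + y * x * x * y * x - y * x * y * x * x - x * y * x * x * y
      = (x * x) * (y * x * y) + y * (x * x) * (y * x) - (y * x * y) * (x * x)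
        - x * y * (x * x) * y := by noncomm_ring
    _ = 0 := by
      rw [hx, Algebra.algebraMap_eq_smul_one]
      simp only [sub_mul, mul_sub, smul_mul_assoc, mul_smul_comm, one_mul, mul_one, mul_assoc, hy']
      abel

theorem Quaternion.mul_self_eq_two_re_smul_sub_normSq {R : Type*} [CommRing R] (x : ℍ[R]) :
    x * x = (2 * x.re) • x - algebraMap R ℍ[R] (normSq x) := by
  have h := self_mul_star x
  rw [star_eq_two_re_sub, mul_sub, mul_coe_eq_smul] at h
  rw [algebraMap_def, ← h]
  abel

theorem qi_mul_qi : qi * qi = -1 := by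
  have hqi : qi.re = 0 ∧ qi.imI = 1 ∧ qi.imJ = 0 ∧ qi.imK = 0 := ⟨rfl, rfl, rfl, rfl⟩
  ext <;> simp [re_mul, imI_mul, imJ_mul, imK_mul, hqi]

theorem quaternion_expression_vanishes (x : ℍ[ℝ]) :
    x * x * qi * x * qi + qi * x * x * qi * x
      - qi * x * qi * x * x - x * qi * x * x * qi = 0 :=
  quintic_identity_of_mul_self_eq x.mul_self_eq_two_re_smul_sub_normSq
    (by rw [qi_mul_qi]; exact Commute.neg_one_left x)
end

section
/- Fundamental theorem of algebra for one-sided quaternion polynomials: let n ∈ ℕ and a₀, …, a_{n−1} ∈ ℍ, and suppose a_ℓ ≠ 0 for some ℓ ≥ 1. Then the polynomial p(x) = Σ_{ℓ=0}^{n−1} a_ℓ·x^ℓ has at least one root in ℍ, i.e., there exists x ∈ ℍ with Σ_{ℓ=0}^{n−1} a_ℓ·x^ℓ = 0. -/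
/-!
With the variable central, `p * p̄` (coefficients conjugated) has real coefficients and degree
`2 deg p`, so it has a complex, hence quaternionic, root `q`. Evaluating the product gives
`(p * p̄)(q) = p(c q c⁻¹) c` with `c = p̄(q)`, so `c q c⁻¹` is a root of `p` unless `c = 0`.
In that case reduce modulo `w² = 2 Re q · w - |q|²`: on the solutions `w` of this equation
`p(w) = A w + B` and `p̄(w) = Ā w + B̄`, and `p̄(q) = 0` makes `A⁻¹ q̄ A` (or `q` if `A = 0`)
a root of `p`.
-/

open Quaternion Polynomial

namespace Polynomial

section StarCoeff

variable {R : Type*} [Semiring R] [StarRing R]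

noncomputable def starCoeff (p : R[X]) : R[X] := ∑ n ∈ p.support, monomial n (star (p.coeff n))

@[simp]
theorem coeff_starCoeff (p : R[X]) (n : ℕ) : (starCoeff p).coeff n = star (p.coeff n) := by
  by_cases hn : n ∈ p.support
  · simp [starCoeff, coeff_monomial, hn]
  · simp_all [starCoeff, coeff_monomial]

@[simp]
theorem support_starCoeff (p : R[X]) : (starCoeff p).support = p.support := by
  ext n
  simp

@[simp]
theorem degree_starCoeff (p : R[X]) : (starCoeff p).degree = p.degree := by
  simp [degree]

theorem isSelfAdjoint_coeff_mul_starCoeff (p : R[X]) (n : ℕ) :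
    IsSelfAdjoint ((p * starCoeff p).coeff n) := by
  simp only [IsSelfAdjoint, coeff_mul, star_sum, star_mul, coeff_starCoeff, star_star]
  exact Finset.Nat.sum_antidiagonal_swap (f := fun ij => p.coeff ij.1 * star (p.coeff ij.2))

end StarCoeff

theorem eval_mul_eq_sum {R : Type*} [Semiring R] (p q : R[X]) (x : R) :
    (p * q).eval x = p.sum fun n a => a * q.eval x * x ^ n := by
  induction p using Polynomial.induction_on' with
  | add p₁ p₂ h₁ h₂ => rw [add_mul, eval_add, h₁, h₂, sum_add_index] <;> simp [add_mul]
  | monomial n a =>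
    rw [sum_monomial_index _ _ (by simp), ← C_mul_X_pow_eq_monomial, mul_assoc,
      (commute_X_pow q n).eq, ← mul_assoc, eval_mul_X_pow, eval_C_mul]

theorem eval_mul_of_eval_ne_zero {D : Type*} [DivisionRing D] {p q : D[X]} {x : D}
    (hq : q.eval x ≠ 0) :
    (p * q).eval x = p.eval (q.eval x * x * (q.eval x)⁻¹) * q.eval x := by
  rw [eval_eq_sum (p := p), eval_mul_eq_sum, sum_def, sum_def, Finset.sum_mul]
  generalize q.eval x = c at hq ⊢
  refine Finset.sum_congr rfl fun n _ => ?_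
  have conj_pow : (c * x * c⁻¹) ^ n = c * x ^ n * c⁻¹ := by
    simpa using GroupWithZero.conj_pow₀ (s := n) (d := x) (inv_ne_zero hq)
  rw [conj_pow, mul_assoc _ (c * x ^ n * c⁻¹), inv_mul_cancel_right₀ hq, mul_assoc]

section QuadraticReduction

variable {R A : Type*} [CommRing R] [Ring A] [Algebra R A]

def powCoeffs (s t : R) : ℕ → R × R
  | 0 => (0, 1)
  | n + 1 => (s * (powCoeffs s t n).1 + (powCoeffs s t n).2, -t * (powCoeffs s t n).1)

theorem pow_eq_of_mul_self_eq {s t : R} {w : A} (hw : w * w = s • w - t • 1) (n : ℕ) :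
    w ^ n = (powCoeffs s t n).1 • w + (powCoeffs s t n).2 • 1 := by
  induction n with
  | zero => simp [powCoeffs]
  | succ n ih =>
    rw [pow_succ, ih, add_mul, smul_mul_assoc, smul_mul_assoc, one_mul, hw, powCoeffs]
    module

theorem eval_eq_of_mul_self_eq {s t : R} {w : A} (hw : w * w = s • w - t • 1) (p : A[X]) :
    p.eval w = (p.sum fun n a => (powCoeffs s t n).1 • a) * w +
      p.sum fun n a => (powCoeffs s t n).2 • a := by
  rw [eval_eq_sum, sum_def, sum_def, sum_def, Finset.sum_mul, ← Finset.sum_add_distrib]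
  refine Finset.sum_congr rfl fun n _ => ?_
  rw [pow_eq_of_mul_self_eq hw, mul_add, mul_smul_comm, mul_smul_comm, mul_one, smul_mul_assoc]

end QuadraticReduction

end Polynomial

namespace Quaternion

theorem mul_self_eq_two_re_smul_sub {R : Type*} [CommRing R] (q : ℍ[R]) :
    q * q = (2 * q.re) • q - normSq q • (1 : ℍ[R]) := by
  ext <;> simp [normSq_def'] <;> ring

theorem exists_eval_eq_zero_of_isSelfAdjoint_coeff {F : ℍ[ℝ][X]}
    (hF : ∀ n, IsSelfAdjoint (F.coeff n)) (hdeg : 0 < F.degree) : ∃ q, F.eval q = 0 := by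
  have hlifts : F ∈ lifts (algebraMap ℝ ℍ[ℝ]) :=
    (lifts_iff_coeff_lifts F).2 fun n => ⟨(F.coeff n).re, (star_eq_self.1 (hF n)).symm⟩
  obtain ⟨G, rfl⟩ := (lifts_iff_set_range F).1 hlifts
  rw [degree_map_eq_of_injective (algebraMap ℝ ℍ[ℝ]).injective] at hdeg
  obtain ⟨z, hz⟩ := IsAlgClosed.exists_aeval_eq_zero ℂ G hdeg.ne'
  exact ⟨ofComplex z, by rw [eval_map_algebraMap, aeval_algHom_apply, hz, map_zero]⟩

theorem exists_eval_eq_mul_add {R : Type*} [CommRing R] (p : ℍ[R][X]) (s t : R) :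
    ∃ A B : ℍ[R], ∀ w : ℍ[R], w * w = s • w - t • 1 →
      p.eval w = A * w + B ∧ (starCoeff p).eval w = star A * w + star B := by
  refine ⟨_, _, fun w hw => ⟨eval_eq_of_mul_self_eq hw p, ?_⟩⟩
  simp [eval_eq_of_mul_self_eq hw, sum_def, star_sum, Quaternion.star_smul]

theorem exists_eval_eq_zero_of_eval_starCoeff_eq_zero {p : ℍ[ℝ][X]} {q : ℍ[ℝ]}
    (hq : (starCoeff p).eval q = 0) : ∃ x, p.eval x = 0 := by
  obtain ⟨A, B, hAB⟩ := exists_eval_eq_mul_add p (2 * q.re) (normSq q)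
  have hlin : star A * q + star B = 0 := (hAB q (mul_self_eq_two_re_smul_sub q)).2 ▸ hq
  by_cases hA : A = 0
  · have hB : B = 0 := by simpa [hA] using hlin
    exact ⟨q, by rw [(hAB q (mul_self_eq_two_re_smul_sub q)).1, hA, hB, zero_mul, zero_add]⟩
  · set x := A⁻¹ * star q * A
    have hx : x * x = (2 * q.re) • x - normSq q • 1 := by
      rw [← sq, GroupWithZero.conj_pow₀ hA, sq, mul_self_eq_two_re_smul_sub (star q), re_star, normSq_star,
        mul_sub, sub_mul, mul_smul_comm, smul_mul_assoc, mul_smul_comm, smul_mul_assoc, mul_one,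
        inv_mul_cancel₀ hA]
    -- `x` satisfies the same quadratic equation as `q`, and `A * x + B = star (star A * q + star B)`
    refine ⟨x, ?_⟩
    rw [(hAB x hx).1, ← mul_assoc, ← mul_assoc, mul_inv_cancel₀ hA, one_mul]
    simpa using congrArg star hlin

theorem exists_eval_eq_zero {p : ℍ[ℝ][X]} (hp : 0 < p.degree) : ∃ x, p.eval x = 0 := by
  have hdeg : 0 < (p * starCoeff p).degree := by
    rw [degree_mul, degree_starCoeff]
    exact hp.trans_le (le_add_of_nonneg_right hp.le)
  obtain ⟨q, hq⟩ :=
    exists_eval_eq_zero_of_isSelfAdjoint_coeff (isSelfAdjoint_coeff_mul_starCoeff p) hdeg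
  by_cases h : (starCoeff p).eval q = 0
  · exact exists_eval_eq_zero_of_eval_starCoeff_eq_zero h
  · rw [eval_mul_of_eval_ne_zero h] at hq
    exact ⟨_, (mul_eq_zero.1 hq).resolve_right h⟩

end Quaternion

/-- Fundamental theorem of algebra for one-sided quaternion polynomials: if some
coefficient `a ℓ` with `ℓ ≥ 1` is non-zero, then `x ↦ Σ_{ℓ<n} a ℓ * x^ℓ` has a root. -/
theorem onesided_quaternion_poly_has_root (n : ℕ) (a : Fin n → ℍ[ℝ])
    (h : ∃ ℓ : Fin n, 1 ≤ (ℓ : ℕ) ∧ a ℓ ≠ 0) :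
    ∃ x : ℍ[ℝ], ∑ ℓ : Fin n, a ℓ * x ^ (ℓ : ℕ) = 0 := by
  obtain ⟨ℓ, hℓ, haℓ⟩ := h
  set p : ℍ[ℝ][X] := ∑ k : Fin n, monomial k (a k)
  have hcoeff : p.coeff ℓ = a ℓ := by
    simp [p, finsetSum_coeff, coeff_monomial, Fin.val_inj]
  have hdeg : 0 < p.degree :=
    (WithBot.coe_lt_coe.2 hℓ).trans_le (le_degree_of_ne_zero (hcoeff ▸ haℓ))
  obtain ⟨x, hx⟩ := Quaternion.exists_eval_eq_zero hdeg
  exact ⟨x, by simpa [p, eval_finsetSum] using hx⟩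
end

section
/- There exist no quaternions a, b, c ∈ ℍ such that the one-sided quadratic polynomial p(x) = a·x² + b·x + c satisfies p(i) = 0, p(j) = 0, and p(k) = 1. (Interpolation by one-sided quaternion polynomials can fail even at pairwise distinct nodes.) -/
open Quaternion

def qj : ℍ[ℝ] := ⟨0, 0, 1, 0⟩
def qk : ℍ[ℝ] := ⟨0, 0, 0, 1⟩

/-!
At the nodes `i`, `j`, `k` all squares equal `-1`, so `p(i) = p(j)` forces `b (i - j) = 0`,
hence `b = 0`; then `p` takes the same value `c - a` at all three nodes.
-/

theorem quadratic_eval_eq_of_sq_eq {R : Type*} [DivisionRing R] {a b c u v w : R} (huv : u ≠ v)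
    (hu : u ^ 2 = w ^ 2) (hv : v ^ 2 = w ^ 2) (h : a * u ^ 2 + b * u + c = a * v ^ 2 + b * v + c) :
    a * w ^ 2 + b * w + c = a * u ^ 2 + b * u + c := by
  have hb : b * (u - v) = 0 := by
    rw [hu, hv] at h
    rw [mul_sub]
    exact sub_eq_zero.2 (add_left_cancel (add_right_cancel h))
  obtain rfl : b = 0 := (mul_eq_zero.1 hb).resolve_right (sub_ne_zero.2 huv)
  simp [hu]

theorem Quaternion.sq_eq_neg_one_of_re_eq_zero {R : Type*} [CommRing R] [LinearOrder R]
    [IsStrictOrderedRing R] {q : ℍ[R]} (hre : q.re = 0) (hn : normSq q = 1) : q ^ 2 = -1 := by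
  rw [sq_eq_neg_normSq.2 hre, hn, coe_one]

theorem qi_sq : qi ^ 2 = -1 :=
  sq_eq_neg_one_of_re_eq_zero rfl (by rw [normSq_def']; norm_num [qi])

theorem qj_sq : qj ^ 2 = -1 :=
  sq_eq_neg_one_of_re_eq_zero rfl (by rw [normSq_def']; norm_num [qj])

theorem qk_sq : qk ^ 2 = -1 :=
  sq_eq_neg_one_of_re_eq_zero rfl (by rw [normSq_def']; norm_num [qk])

theorem qi_ne_qj : qi ≠ qj := fun h ↦ by simpa [qi, qj] using congrArg QuaternionAlgebra.imI h

/-- No one-sided quadratic quaternion polynomial `p(x) = a·x² + b·x + c` satisfies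
`p(i) = 0`, `p(j) = 0` and `p(k) = 1`. -/
theorem no_quadratic_interpolating_ijk :
    ¬ ∃ a b c : ℍ[ℝ],
      a * qi ^ 2 + b * qi + c = 0 ∧
      a * qj ^ 2 + b * qj + c = 0 ∧
      a * qk ^ 2 + b * qk + c = 1 := by
  rintro ⟨a, b, c, hi, hj, hk⟩
  have hki : a * qk ^ 2 + b * qk + c = a * qi ^ 2 + b * qi + c :=
    quadratic_eval_eq_of_sq_eq qi_ne_qj (qi_sq.trans qk_sq.symm) (qj_sq.trans qk_sq.symm)
      (hi.trans hj.symm)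
  rw [hk, hi] at hki
  exact one_ne_zero hki
end

section
/- Let x₀, …, x_{n−1} ∈ ℍ be pairwise distinct and such that no three of them are automorphically equivalent (i.e., no three among them share both the same real part and the same norm of imaginary part). Then for any y₀, …, y_{n−1} ∈ ℍ there exist coefficients a₀, …, a_{n−1} ∈ ℍ such that Σ_{ℓ=0}^{n−1} a_ℓ·x_m^ℓ = y_m for every m = 0, …, n−1. (Existence of one-sided quaternion interpolation polynomials.) -/
open Quaternion

/-- Two quaternions are automorphically equivalent iff they have the same real part
and the same norm of imaginary part (equivalently, they are conjugate). -/
def AutEquiv (a b : ℍ[ℝ]) : Prop := a.re = b.re ∧ ‖a.im‖ = ‖b.im‖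

open Finset

local notation "H" => ℍ[ℝ]

-- telescoping
lemma tele (c t : H) : ∀ j : ℕ, ∑ i ∈ range j, c ^ (j - i - 1) * ((t - c) * t ^ i) = t ^ j - c ^ j := by
  intro j
  induction j with
  | zero => simp
  | succ j ih =>
    rw [Finset.sum_range_succ]
    have h1 : ∀ i ∈ range j, c ^ (j + 1 - i - 1) * ((t - c) * t ^ i)
        = c * (c ^ (j - i - 1) * ((t - c) * t ^ i)) := by
      intro i hi
      rw [Finset.mem_range] at hi
      have h2 : j + 1 - i - 1 = (j - i - 1) + 1 := by omega
      rw [h2, pow_succ', mul_assoc]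
    rw [Finset.sum_congr rfl h1, ← Finset.mul_sum, ih]
    have : j + 1 - j - 1 = 0 := by omega
    rw [this, pow_succ', pow_succ']
    noncomm_ring

lemma conj_pow' (u g : H) (hu : u ≠ 0) (i : ℕ) : (u * g * u⁻¹) ^ i * u = u * g ^ i := by
  induction i with
  | zero => simp
  | succ i ih =>
    have h3 : u * g * u⁻¹ * u = u * g := by rw [mul_assoc, inv_mul_cancel₀ hu, mul_one]
    rw [pow_succ, mul_assoc, h3, ← mul_assoc, ih, pow_succ, mul_assoc]

/-- Right division by `X - c` for left-coefficient quaternion polynomials. -/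
lemma peel (n : ℕ) (a : ℕ → H) (c : H) (hsupp : ∀ i, n ≤ i → a i = 0)
    (hroot : ∑ i ∈ range n, a i * c ^ i = 0) :
    ∃ b : ℕ → H, (∀ i, n - 1 ≤ i → b i = 0) ∧
      (∀ t, ∑ i ∈ range n, a i * t ^ i = ∑ i ∈ range (n - 1), b i * ((t - c) * t ^ i)) ∧
      (∀ i, a (i + 1) = b i - b (i + 1) * c) ∧ a 0 = -(b 0 * c) := by
  set b : ℕ → H := fun i => ∑ j ∈ Ico (i + 1) n, a j * c ^ (j - i - 1) with hbdef
  have hb0 : ∀ i, n - 1 ≤ i → b i = 0 := by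
    intro i hi
    simp only [hbdef]
    rw [Finset.Ico_eq_empty (by omega : ¬ i + 1 < n), Finset.sum_empty]
  have hbco : ∀ i, a (i + 1) = b i - b (i + 1) * c := by
    intro i
    by_cases h : i + 1 < n
    · have hb1 : b i = a (i + 1) + ∑ j ∈ Ico (i + 2) n, a j * c ^ (j - i - 1) := by
        simp only [hbdef]
        rw [Finset.sum_eq_sum_Ico_succ_bot h (fun j => a j * c ^ (j - i - 1))]
        simp
      have hb2 : b (i + 1) * c = ∑ j ∈ Ico (i + 2) n, a j * c ^ (j - i - 1) := by
        simp only [hbdef]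
        rw [Finset.sum_mul]
        refine Finset.sum_congr rfl fun j hj => ?_
        rw [Finset.mem_Ico] at hj
        rw [mul_assoc, ← pow_succ]
        congr 2
        omega
      rw [hb1, hb2, add_sub_cancel_right]
    · push_neg at h
      rw [hsupp (i + 1) h, hb0 i (by omega), hb0 (i + 1) (by omega), zero_mul, sub_zero]
  have hbc0 : a 0 = -(b 0 * c) := by
    by_cases hn : 0 < n
    · have h1 : b 0 * c = ∑ j ∈ Ico 1 n, a j * c ^ j := by
        simp only [hbdef]
        rw [Finset.sum_mul]
        refine Finset.sum_congr rfl fun j hj => ?_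
        rw [Finset.mem_Ico] at hj
        rw [mul_assoc, ← pow_succ]
        congr 2
        omega
      have h2 : a 0 + ∑ j ∈ Ico 1 n, a j * c ^ j = 0 := by
        rw [← hroot, Finset.range_eq_Ico, Finset.sum_eq_sum_Ico_succ_bot hn]
        simp
      rw [h1]
      exact eq_neg_of_add_eq_zero_left h2
    · push_neg at hn
      have hn0 : n = 0 := by omega
      subst hn0
      rw [hsupp 0 (le_refl 0), hb0 0 (by omega), zero_mul, neg_zero]
  refine ⟨b, hb0, ?_, hbco, hbc0⟩
  intro t
  have swap0 : ∑ i ∈ range n, ∑ j ∈ Ico (i + 1) n, a j * c ^ (j - i - 1) * ((t - c) * t ^ i)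
      = ∑ j ∈ range n, ∑ i ∈ range j, a j * c ^ (j - i - 1) * ((t - c) * t ^ i) := by
    have := Finset.sum_Ico_Ico_comm' 0 n (fun i j => a j * c ^ (j - i - 1) * ((t - c) * t ^ i))
    simpa [← Finset.range_eq_Ico] using this
  have swap1 : ∑ i ∈ range (n - 1), ∑ j ∈ Ico (i + 1) n, a j * c ^ (j - i - 1) * ((t - c) * t ^ i)
      = ∑ i ∈ range n, ∑ j ∈ Ico (i + 1) n, a j * c ^ (j - i - 1) * ((t - c) * t ^ i) := by
    apply Finset.sum_subset (Finset.range_subset_range.2 (by omega))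
    intro i hi hni
    rw [Finset.mem_range] at hi
    rw [Finset.mem_range] at hni
    rw [Finset.Ico_eq_empty (by omega : ¬ i + 1 < n), Finset.sum_empty]
  calc ∑ i ∈ range n, a i * t ^ i
      = ∑ j ∈ range n, a j * (t ^ j - c ^ j) := by
        rw [← sub_zero (∑ i ∈ range n, a i * t ^ i), ← hroot, ← Finset.sum_sub_distrib]
        exact Finset.sum_congr rfl fun j _ => by rw [mul_sub]
    _ = ∑ j ∈ range n, ∑ i ∈ range j, a j * c ^ (j - i - 1) * ((t - c) * t ^ i) := by
        refine Finset.sum_congr rfl fun j _ => ?_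
        rw [← tele c t j, Finset.mul_sum]
        exact Finset.sum_congr rfl fun i _ => by rw [mul_assoc]
    _ = ∑ i ∈ range (n - 1), ∑ j ∈ Ico (i + 1) n, a j * c ^ (j - i - 1) * ((t - c) * t ^ i) := by
        rw [swap1, swap0]
    _ = ∑ i ∈ range (n - 1), b i * ((t - c) * t ^ i) := by
        refine Finset.sum_congr rfl fun i _ => ?_
        simp only [hbdef]
        rw [Finset.sum_mul]

lemma normSq_decomp (a : H) : normSq a = a.re ^ 2 + ‖a.im‖ ^ 2 := by
  have h : ‖a.im‖ ^ 2 = normSq a.im := by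
    rw [sq, ← Quaternion.normSq_eq_norm_mul_self]
  rw [h, Quaternion.normSq_def', Quaternion.normSq_def']
  simp
  ring

lemma autequiv_iff (a b : H) : AutEquiv a b ↔ a.re = b.re ∧ normSq a = normSq b := by
  constructor
  · rintro ⟨h1, h2⟩
    refine ⟨h1, ?_⟩
    rw [normSq_decomp, normSq_decomp, h1, h2]
  · rintro ⟨h1, h2⟩
    refine ⟨h1, ?_⟩
    rw [normSq_decomp, normSq_decomp, h1] at h2
    have h3 : ‖a.im‖ ^ 2 = ‖b.im‖ ^ 2 := by linarith
    have h4 := congrArg Real.sqrt h3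
    simpa [Real.sqrt_sq, norm_nonneg] using h4

lemma autequiv_symm {a b : H} (h : AutEquiv a b) : AutEquiv b a := ⟨h.1.symm, h.2.symm⟩

lemma autequiv_trans {a b c : H} (h1 : AutEquiv a b) (h2 : AutEquiv b c) : AutEquiv a c :=
  ⟨h1.1.trans h2.1, h1.2.trans h2.2⟩

lemma re_mul_comm (a b : H) : (a * b).re = (b * a).re := by
  simp only [Quaternion.re_mul]
  ring

lemma re_conj (u t : H) (hu : u ≠ 0) : (u * t * u⁻¹).re = t.re := by
  rw [re_mul_comm, ← mul_assoc, inv_mul_cancel₀ hu, one_mul]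

lemma normSq_conj (u t : H) (hu : u ≠ 0) : normSq (u * t * u⁻¹) = normSq t := by
  have hns : Quaternion.normSq u ≠ 0 := by
    simpa [Quaternion.normSq_eq_zero] using hu
  rw [map_mul, map_mul, map_inv₀]
  field_simp

lemma autequiv_conj (u t : H) (hu : u ≠ 0) : AutEquiv (u * t * u⁻¹) t :=
  (autequiv_iff _ _).mpr ⟨re_conj u t hu, normSq_conj u t hu⟩

lemma twist {c d : H} (h : AutEquiv c d) : (d - c) * d = star c * (d - c) := by
  obtain ⟨hre, hns⟩ := (autequiv_iff _ _).mp h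
  have h1 : star c - star d = d - c := by
    have hc : star c = ((2 * c.re : ℝ) : H) - c := by
      rw [eq_sub_iff_add_eq, add_comm, Quaternion.self_add_star']
    have hd : star d = ((2 * d.re : ℝ) : H) - d := by
      rw [eq_sub_iff_add_eq, add_comm, Quaternion.self_add_star']
    rw [hc, hd, hre]
    noncomm_ring
  have h2 : star c * c = star d * d := by
    rw [Quaternion.star_mul_self, Quaternion.star_mul_self, hns]
  calc (d - c) * d = (star c - star d) * d := by rw [h1]
    _ = star c * d - star d * d := by noncomm_ring
    _ = star c * d - star c * c := by rw [h2]
    _ = star c * (d - c) := by noncomm_ring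

lemma twist_pow {c d : H} (h : AutEquiv c d) (i : ℕ) :
    (d - c) * d ^ i = (star c) ^ i * (d - c) := by
  induction i with
  | zero => simp
  | succ i ih =>
    rw [pow_succ', ← mul_assoc, twist h, mul_assoc, ih, pow_succ', mul_assoc]

lemma chi_root {c g : H} (hchi : g * g - (c + star c) * g + star c * c = 0) (hg : g ≠ c) :
    AutEquiv g c := by
  have h1 : ((2 * g.re : ℝ) : H) * g = g * g + star g * g := by
    rw [← Quaternion.self_add_star']
    noncomm_ring
  have h2 : ((2 * c.re : ℝ) : H) * g = g * g + star c * c := by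
    rw [← Quaternion.self_add_star' (a := c)]
    calc (c + star c) * g
        = g * g + star c * c - (g * g - (c + star c) * g + star c * c) := by noncomm_ring
      _ = g * g + star c * c := by rw [hchi, sub_zero]
  have hsub : ((2 * g.re - 2 * c.re : ℝ) : H) * g = ((normSq g - normSq c : ℝ) : H) := by
    rw [Quaternion.coe_sub, Quaternion.coe_sub, sub_mul, h1, h2,
      ← Quaternion.star_mul_self g, ← Quaternion.star_mul_self c]
    noncomm_ring
  by_cases hα : 2 * g.re - 2 * c.re = 0
  · rw [hα] at hsub
    simp only [Quaternion.coe_zero, zero_mul] at hsub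
    have hβ : normSq g - normSq c = 0 := by
      have : ((normSq g - normSq c : ℝ) : H) = ((0 : ℝ) : H) := by
        rw [← hsub]; simp
      exact Quaternion.coe_injective this
    exact (autequiv_iff _ _).mpr ⟨by linarith, by linarith⟩
  · exfalso
    have hgcoe : g = (((2 * g.re - 2 * c.re)⁻¹ * (normSq g - normSq c) : ℝ) : H) := by
      rw [Quaternion.coe_mul, ← hsub, ← mul_assoc, ← Quaternion.coe_mul, inv_mul_cancel₀ hα]
      simp
    have hfact : (g - c) * (g - star c) = 0 := by
      have hcomm : g * star c = star c * g := by
        rw [hgcoe, Quaternion.coe_commutes]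
      have hcc : c * star c = star c * c := by
        rw [Quaternion.self_mul_star, Quaternion.star_mul_self]
      calc (g - c) * (g - star c)
          = g * g - g * star c - c * g + c * star c := by noncomm_ring
        _ = g * g - star c * g - c * g + star c * c := by rw [hcomm, hcc]
        _ = g * g - (c + star c) * g + star c * c := by noncomm_ring
        _ = 0 := hchi
    rcases mul_eq_zero.mp hfact with h0 | h0
    · exact hg (by rwa [sub_eq_zero] at h0)
    · have hgstar : g = star c := by rwa [sub_eq_zero] at h0
      have hsg : star g = g := by rw [hgcoe, Quaternion.star_coe]
      exact hg (by rw [← star_star c, ← hgstar, hsg])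

lemma eval_shift {m : ℕ} (b : ℕ → H) (g c : H) (hgc : g ≠ c)
    (h0 : ∑ i ∈ range m, b i * ((g - c) * g ^ i) = 0) :
    ∑ i ∈ range m, b i * ((g - c) * g * (g - c)⁻¹) ^ i = 0 := by
  have hu : g - c ≠ 0 := sub_ne_zero.mpr hgc
  have h1 : ∀ i ∈ range m, b i * ((g - c) * g ^ i)
      = b i * ((g - c) * g * (g - c)⁻¹) ^ i * (g - c) := by
    intro i _
    rw [mul_assoc, conj_pow' (g - c) g hu i]
  rw [Finset.sum_congr rfl h1, ← Finset.sum_mul] at h0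
  rcases mul_eq_zero.mp h0 with h | h
  · exact h
  · exact absurd h hu

lemma vanish : ∀ (n : ℕ) (s : Finset H), s.card = n →
    (∀ p ∈ s, ∀ q ∈ s, ∀ r ∈ s, p ≠ q → p ≠ r → q ≠ r → ¬(AutEquiv p q ∧ AutEquiv q r)) →
    ∀ a : ℕ → H, (∀ i, n ≤ i → a i = 0) →
    (∀ t ∈ s, ∑ i ∈ range n, a i * t ^ i = 0) → ∀ i, a i = 0 := by
  intro n
  induction n using Nat.strong_induction_on with
  | _ n IH =>
  intro s hcard hthree a hsupp hroot
  classical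
  by_cases hA : ∃ c ∈ s, ∃ d ∈ s, c ≠ d ∧ AutEquiv c d
  · -- Case A: a spherical pair
    obtain ⟨c, hc, d, hd, hcd, heq⟩ := hA
    have hn2 : 2 ≤ n := by
      have hsub : ({c, d} : Finset H) ⊆ s := by
        intro z hz
        rcases Finset.mem_insert.mp hz with rfl | hz
        · exact hc
        · rcases Finset.mem_singleton.mp hz with rfl
          exact hd
      have := Finset.card_le_card hsub
      rwa [Finset.card_pair hcd, hcard] at this
    obtain ⟨b, hb0, hbeval, hbco, hbc0⟩ := peel n a c hsupp (hroot c hc)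
    have hrootb : ∑ i ∈ range (n - 1), b i * (star c) ^ i = 0 := by
      have h0 : ∑ i ∈ range (n - 1), b i * ((d - c) * d ^ i) = 0 := by
        rw [← hbeval d]; exact hroot d hd
      have h1 : ∀ i ∈ range (n - 1), b i * ((d - c) * d ^ i)
          = b i * (star c) ^ i * (d - c) := by
        intro i _
        rw [twist_pow heq i, mul_assoc]
      rw [Finset.sum_congr rfl h1, ← Finset.sum_mul] at h0
      rcases mul_eq_zero.mp h0 with h | h
      · exact h
      · exact absurd (sub_eq_zero.mp h) (Ne.symm hcd)
    obtain ⟨e, he0, heeval, heco, hec0⟩ := peel (n - 1) b (star c) hb0 hrootb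
    have hn12 : n - 1 - 1 = n - 2 := by omega
    have hdmem : d ∈ s.erase c := Finset.mem_erase.mpr ⟨hcd.symm, hd⟩
    have hs'card : ((s.erase c).erase d).card = n - 2 := by
      rw [Finset.card_erase_of_mem hdmem, Finset.card_erase_of_mem hc, hcard]
      omega
    have hroote : ∀ g ∈ (s.erase c).erase d, ∑ i ∈ range (n - 2), e i * g ^ i = 0 := by
      intro g hg
      have hgd : g ≠ d := (Finset.mem_erase.mp hg).1
      have hgc : g ≠ c := (Finset.mem_erase.mp (Finset.mem_of_mem_erase hg)).1
      have hgs : g ∈ s := Finset.mem_of_mem_erase (Finset.mem_of_mem_erase hg)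
      have hu : g - c ≠ 0 := sub_ne_zero.mpr hgc
      set g' := (g - c) * g * (g - c)⁻¹ with hg'def
      have hEbg' : ∑ i ∈ range (n - 1), b i * g' ^ i = 0 := by
        apply eval_shift b g c hgc
        rw [← hbeval g]; exact hroot g hgs
      have h2 : ∑ i ∈ range (n - 1 - 1), e i * ((g' - star c) * g' ^ i) = 0 := by
        rw [← heeval g']; exact hEbg'
      -- multiply by (g - c) on the right and simplify to χ
      have hchi : ∀ i ∈ range (n - 1 - 1), e i * ((g' - star c) * g' ^ i) * (g - c)
          = e i * g ^ i * (g * g - (c + star c) * g + star c * c) := by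
        intro i _
        have e1 : g' ^ i * (g - c) = (g - c) * g ^ i := conj_pow' (g - c) g hu i
        have e2 : (g' - star c) * (g - c) = g * g - (c + star c) * g + star c * c := by
          have e3 : g' * (g - c) = (g - c) * g := by
            rw [hg'def, mul_assoc, inv_mul_cancel₀ hu, mul_one]
          calc (g' - star c) * (g - c) = g' * (g - c) - star c * (g - c) := by noncomm_ring
            _ = (g - c) * g - star c * (g - c) := by rw [e3]
            _ = g * g - (c + star c) * g + star c * c := by noncomm_ring
        have hcomg : Commute g (g * g - (c + star c) * g + star c * c) := by
          rw [Quaternion.self_add_star', Quaternion.star_mul_self]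
          exact (((Commute.refl g).mul_right (Commute.refl g)).sub_right
            (((Quaternion.coe_commute (2 * c.re) g).symm).mul_right (Commute.refl g))).add_right
            ((Quaternion.coe_commute (normSq c) g).symm)
        calc e i * ((g' - star c) * g' ^ i) * (g - c)
            = e i * ((g' - star c) * (g' ^ i * (g - c))) := by
              noncomm_ring
          _ = e i * ((g' - star c) * ((g - c) * g ^ i)) := by rw [e1]
          _ = e i * (((g' - star c) * (g - c)) * g ^ i) := by rw [mul_assoc]
          _ = e i * ((g * g - (c + star c) * g + star c * c) * g ^ i) := by rw [e2]
          _ = e i * (g ^ i * (g * g - (c + star c) * g + star c * c)) := by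
              rw [((hcomg.pow_left i).eq).symm]
          _ = e i * g ^ i * (g * g - (c + star c) * g + star c * c) := by rw [mul_assoc]
      have h3 : (∑ i ∈ range (n - 1 - 1), e i * g ^ i)
          * (g * g - (c + star c) * g + star c * c) = 0 := by
        rw [Finset.sum_mul, ← Finset.sum_congr rfl hchi, ← Finset.sum_mul, h2, zero_mul]
      have hchine : g * g - (c + star c) * g + star c * c ≠ 0 := by
        intro h
        exact hthree g hgs c hc d hd hgc hgd hcd ⟨chi_root h hgc, heq⟩
      rw [← hn12]
      rcases mul_eq_zero.mp h3 with h | h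
      · exact h
      · exact absurd h hchine
    have hthree' : ∀ p ∈ (s.erase c).erase d, ∀ q ∈ (s.erase c).erase d,
        ∀ r ∈ (s.erase c).erase d, p ≠ q → p ≠ r → q ≠ r → ¬(AutEquiv p q ∧ AutEquiv q r) := by
      intro p hp q hq r hr
      exact hthree p (Finset.mem_of_mem_erase (Finset.mem_of_mem_erase hp))
        q (Finset.mem_of_mem_erase (Finset.mem_of_mem_erase hq))
        r (Finset.mem_of_mem_erase (Finset.mem_of_mem_erase hr))
    have he0' : ∀ i, n - 2 ≤ i → e i = 0 := by
      intro i hi; exact he0 i (by omega)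
    have heall : ∀ i, e i = 0 :=
      IH (n - 2) (by omega) ((s.erase c).erase d) hs'card hthree' e he0' hroote
    have hball : ∀ i, b i = 0 := by
      intro i
      cases i with
      | zero => rw [hec0, heall 0, zero_mul, neg_zero]
      | succ i => rw [heco i, heall i, heall (i + 1), zero_mul, sub_zero]
    intro i
    cases i with
    | zero => rw [hbc0, hball 0, zero_mul, neg_zero]
    | succ i => rw [hbco i, hball i, hball (i + 1), zero_mul, sub_zero]
  · -- Case B: all conjugacy classes meet s in at most one point
    push_neg at hA
    by_cases hn : n = 0
    · subst hn
      exact fun i => hsupp i (Nat.zero_le i)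
    have hspos : 0 < s.card := by rw [hcard]; omega
    obtain ⟨c, hc⟩ := Finset.card_pos.mp hspos
    obtain ⟨b, hb0, hbeval, hbco, hbc0⟩ := peel n a c hsupp (hroot c hc)
    set φ : H → H := fun g => (g - c) * g * (g - c)⁻¹ with hφdef
    have hconj : ∀ g ∈ s.erase c, AutEquiv (φ g) g := by
      intro g hg
      exact autequiv_conj (g - c) g (sub_ne_zero.mpr (Finset.mem_erase.mp hg).1)
    have hinj : Set.InjOn φ (s.erase c) := by
      intro g hg h hh hφeq
      by_contra hgh
      have hgs : g ∈ s := Finset.mem_of_mem_erase hg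
      have hhs : h ∈ s := Finset.mem_of_mem_erase hh
      exact hA g hgs h hhs hgh
        (autequiv_trans (autequiv_symm (hconj g hg)) (hφeq ▸ hconj h hh))
    have hs'card : ((s.erase c).image φ).card = n - 1 := by
      rw [Finset.card_image_of_injOn hinj, Finset.card_erase_of_mem hc, hcard]
    have hA' : ∀ p ∈ (s.erase c).image φ, ∀ q ∈ (s.erase c).image φ, p ≠ q → ¬AutEquiv p q := by
      intro p hp q hq hpq hpq2
      obtain ⟨g, hg, rfl⟩ := Finset.mem_image.mp hp
      obtain ⟨h, hh, rfl⟩ := Finset.mem_image.mp hq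
      have hgh : g ≠ h := fun hgh => hpq (by rw [hgh])
      exact hA g (Finset.mem_of_mem_erase hg) h (Finset.mem_of_mem_erase hh) hgh
        (autequiv_trans (autequiv_symm (hconj g hg)) (autequiv_trans hpq2 (hconj h hh)))
    have hthree' : ∀ p ∈ (s.erase c).image φ, ∀ q ∈ (s.erase c).image φ,
        ∀ r ∈ (s.erase c).image φ, p ≠ q → p ≠ r → q ≠ r
        → ¬(AutEquiv p q ∧ AutEquiv q r) := by
      intro p hp q hq r hr hpq _ _ h
      exact hA' p hp q hq hpq h.1
    have hrootb : ∀ p ∈ (s.erase c).image φ, ∑ i ∈ range (n - 1), b i * p ^ i = 0 := by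
      intro p hp
      obtain ⟨g, hg, rfl⟩ := Finset.mem_image.mp hp
      apply eval_shift b g c (Finset.mem_erase.mp hg).1
      rw [← hbeval g]
      exact hroot g (Finset.mem_of_mem_erase hg)
    have hball : ∀ i, b i = 0 :=
      IH (n - 1) (by omega) ((s.erase c).image φ) hs'card hthree' b hb0 hrootb
    intro i
    cases i with
    | zero => rw [hbc0, hball 0, zero_mul, neg_zero]
    | succ i => rw [hbco i, hball i, hball (i + 1), zero_mul, sub_zero]

/-- Existence of one-sided quaternion interpolation polynomials: if the nodes are
pairwise distinct and no three of them are automorphically equivalent, then any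
prescribed values can be interpolated. -/
theorem onesided_quaternion_interpolation_exists (n : ℕ) (x : Fin n → ℍ[ℝ])
    (hdist : Function.Injective x)
    (hthree : ∀ l m r : Fin n, l ≠ m → l ≠ r → m ≠ r →
      ¬(AutEquiv (x l) (x m) ∧ AutEquiv (x m) (x r)))
    (y : Fin n → ℍ[ℝ]) :
    ∃ a : Fin n → ℍ[ℝ], ∀ m : Fin n, ∑ ℓ : Fin n, a ℓ * (x m) ^ (ℓ : ℕ) = y m := by
  classical
  let Φ : (Fin n → ℍ[ℝ]) →ₗ[ℍ[ℝ]] (Fin n → ℍ[ℝ]) :=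
    { toFun := fun a m => ∑ ℓ : Fin n, a ℓ * (x m) ^ (ℓ : ℕ)
      map_add' := by
        intro a b
        funext m
        simp [add_mul, Finset.sum_add_distrib]
      map_smul' := by
        intro q a
        funext m
        simp only [Pi.smul_apply, smul_eq_mul, RingHom.id_apply, Finset.mul_sum, mul_assoc] }
  have hker : ∀ a : Fin n → ℍ[ℝ], Φ a = 0 → a = 0 := by
    intro a ha
    set a' : ℕ → ℍ[ℝ] := fun i => if h : i < n then a ⟨i, h⟩ else 0 with ha'def
    set s : Finset ℍ[ℝ] := Finset.image x Finset.univ with hsdef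
    have hcard : s.card = n := by
      rw [hsdef, Finset.card_image_of_injective _ hdist, Finset.card_univ, Fintype.card_fin]
    have hthree' : ∀ p ∈ s, ∀ q ∈ s, ∀ r ∈ s, p ≠ q → p ≠ r → q ≠ r
        → ¬(AutEquiv p q ∧ AutEquiv q r) := by
      intro p hp q hq r hr hpq hpr hqr
      obtain ⟨l, _, rfl⟩ := Finset.mem_image.mp hp
      obtain ⟨m, _, rfl⟩ := Finset.mem_image.mp hq
      obtain ⟨r', _, rfl⟩ := Finset.mem_image.mp hr
      exact hthree l m r' (fun h => hpq (by rw [h])) (fun h => hpr (by rw [h]))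
        (fun h => hqr (by rw [h]))
    have hsupp : ∀ i, n ≤ i → a' i = 0 := by
      intro i hi
      rw [ha'def]
      exact dif_neg (by omega)
    have hroot : ∀ t ∈ s, ∑ i ∈ range n, a' i * t ^ i = 0 := by
      intro t ht
      obtain ⟨m, _, rfl⟩ := Finset.mem_image.mp ht
      have h1 : ∑ i ∈ range n, a' i * (x m) ^ i = ∑ ℓ : Fin n, a ℓ * (x m) ^ (ℓ : ℕ) := by
        rw [← Fin.sum_univ_eq_sum_range (fun i => a' i * (x m) ^ i) n]
        refine Finset.sum_congr rfl fun ℓ _ => ?_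
        congr 1
        rw [ha'def]
        simp [ℓ.isLt]
      rw [h1]
      exact congrFun ha m
    have := vanish n s hcard hthree' a' hsupp hroot
    funext ℓ
    have h2 := this ℓ
    rw [ha'def] at h2
    simpa [ℓ.isLt] using h2
  have hinj : Function.Injective Φ := by
    rw [← LinearMap.ker_eq_bot]
    exact LinearMap.ker_eq_bot'.mpr hker
  obtain ⟨a, ha⟩ := LinearMap.injective_iff_surjective.mp hinj y
  exact ⟨a, fun m => congrFun ha m⟩
end

section
/- Let x₀, …, x_{n−1} ∈ ℍ be pairwise distinct and such that no three of them are automorphically equivalent. If coefficients a₀, …, a_{n−1} ∈ ℍ and b₀, …, b_{n−1} ∈ ℍ satisfy Σ_{ℓ=0}^{n−1} a_ℓ·x_m^ℓ = Σ_{ℓ=0}^{n−1} b_ℓ·x_m^ℓ for every m = 0, …, n−1, then a_ℓ = b_ℓ for all ℓ. (Uniqueness of one-sided quaternion interpolation polynomials.) -/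
open Quaternion

/-!
The difference of the two interpolants is a polynomial `p` (coefficients on the left) of degree
`< n` vanishing at the `n` nodes, so it suffices that a nonzero `p` vanishes at no more than
`deg p` nodes. Over a division ring, `p(c) = 0` gives `p = q * (X - c)` and
`p(z) = q((z - c) z (z - c)⁻¹) (z - c)`, so each further root `z` of `p` yields a root of `q`
conjugate to `z`; for pairwise non-conjugate roots these are again distinct and pairwise
non-conjugate, and induction concludes. If two nodes `a ≠ b` are equivalent, the root of `q`
coming from `b` is `star a`, so `p = r * (X - star a) * (X - a)`. The last two factors multiply
to the real, hence central, polynomial `X² - 2 Re(a) X + |a|²`, which vanishes exactly on the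
class of `a`; since that class contains no further node, `r` vanishes at the remaining nodes.
-/

open Polynomial Finset

namespace Polynomial

theorem exists_eq_mul_X_sub_C_of_eval_eq_zero {R : Type*} [Ring R] {p : R[X]} {c : R}
    (h : p.eval c = 0) : ∃ q, p = q * (X - C c) := by
  have hgeom (n : ℕ) :
      (∑ i ∈ range n, X ^ i * C c ^ (n - 1 - i)) * (X - C c) = X ^ n - C c ^ n :=
    (commute_X (C c)).geom_sum₂_mul n
  refine ⟨p.sum fun n a => C a * ∑ i ∈ range n, X ^ i * C c ^ (n - 1 - i), ?_⟩
  calc p = p.sum (fun n a => C a * X ^ n) - C (p.eval c) := by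
        rw [sum_C_mul_X_pow_eq, h, C_0, sub_zero]
    _ = p.sum fun n a => C a * (X ^ n - C c ^ n) := by
        simp only [eval_eq_sum, sum_def, map_sum, C_mul, C_pow, mul_sub, Finset.sum_sub_distrib]
    _ = _ := by simp only [sum_def, Finset.sum_mul, mul_assoc, hgeom]

theorem natDegree_mul_X_sub_C {R : Type*} [Ring R] [Nontrivial R] {q : R[X]} (hq : q ≠ 0)
    (c : R) : (q * (X - C c)).natDegree = q.natDegree + 1 := by
  rw [natDegree_mul' (by simpa using hq), natDegree_X_sub_C]

theorem eval_mul_map_algebraMap {R A : Type*} [CommSemiring R] [Semiring A] [Algebra R A]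
    (p : A[X]) (q : R[X]) (z : A) :
    (p * q.map (algebraMap R A)).eval z = p.eval z * aeval z q := by
  rw [← eval_map_algebraMap, eval, eval, eval, eval₂_mul_noncomm]
  intro k
  rw [coeff_map]
  exact Algebra.commute_algebraMap_left _ _

variable {D : Type*} [DivisionRing D]

theorem eval_mul_eq_eval_conj_mul (p q : D[X]) (z : D) :
    (p * q).eval z = p.eval (q.eval z * z * (q.eval z)⁻¹) * q.eval z := by
  induction p using Polynomial.induction_on' with
  | add f g hf hg => rw [add_mul, eval_add, eval_add, hf, hg, add_mul]
  | monomial n a =>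
    rw [← C_mul_X_pow_eq_monomial, mul_assoc, X_pow_mul, eval_C_mul, eval_mul_X_pow, eval_C_mul,
      eval_X_pow]
    rcases eq_or_ne (q.eval z) 0 with hv | hv
    · simp [hv]
    · have := Units.conj_pow (Units.mk0 _ hv) z n
      simp only [Units.val_mk0, Units.val_inv_eq_inv_val] at this
      rw [this, mul_assoc a, inv_mul_cancel_right₀ hv]

theorem eval_conj_eq_zero_of_eval_mul_X_sub_C_eq_zero {q : D[X]} {c z : D} (hz : z ≠ c)
    (h : (q * (X - C c)).eval z = 0) : q.eval ((z - c) * z * (z - c)⁻¹) = 0 := by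
  rw [eval_mul_eq_eval_conj_mul, eval_sub, eval_X, eval_C] at h
  exact (mul_eq_zero.mp h).resolve_right (sub_ne_zero.mpr hz)

theorem card_le_natDegree_of_pairwise_not_isConj {s : Finset D}
    (hs : (s : Set D).Pairwise (¬IsConj · ·)) {p : D[X]} (hp : p ≠ 0)
    (hroot : ∀ z ∈ s, p.eval z = 0) : #s ≤ p.natDegree := by
  classical
  induction hk : #s generalizing s p with
  | zero => exact Nat.zero_le _
  | succ k ih =>
    obtain ⟨c, hc⟩ : s.Nonempty := card_pos.mp (by omega)
    obtain ⟨q, rfl⟩ := exists_eq_mul_X_sub_C_of_eval_eq_zero (hroot c hc)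
    have hq : q ≠ 0 := by rintro rfl; simp at hp
    set f : D → D := fun z => (z - c) * z * (z - c)⁻¹
    have hconj : ∀ z ∈ s.erase c, IsConj z (f z) := fun z hz =>
      GroupWithZero.isConj_iff₀.mpr ⟨z - c, sub_ne_zero.mpr (ne_of_mem_erase hz), rfl⟩
    have heq_of_isConj : ∀ z ∈ s.erase c, ∀ w ∈ s.erase c, IsConj (f z) (f w) → z = w :=
      fun z hz w hw hfzw => by_contra fun hne => hs (mem_of_mem_erase hz) (mem_of_mem_erase hw)
        hne ((hconj z hz).trans (hfzw.trans (hconj w hw).symm))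
    have hinj : Set.InjOn f (s.erase c) := fun z hz w hw hfzw =>
      heq_of_isConj z hz w hw (hfzw ▸ IsConj.refl _)
    have hcard : #((s.erase c).image f) = k := by
      rw [card_image_of_injOn hinj, card_erase_of_mem hc, hk, Nat.add_sub_cancel]
    have hpairwise : (((s.erase c).image f : Finset D) : Set D).Pairwise (¬IsConj · ·) := by
      rw [coe_image, hinj.pairwise_image]
      exact fun z hz w hw hne hfzw => hne (heq_of_isConj z hz w hw hfzw)
    have hqroot : ∀ z ∈ (s.erase c).image f, q.eval z = 0 := by
      simp only [mem_image]
      rintro _ ⟨z, hz, rfl⟩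
      exact eval_conj_eq_zero_of_eval_mul_X_sub_C_eq_zero (ne_of_mem_erase hz)
        (hroot z (mem_of_mem_erase hz))
    rw [natDegree_mul_X_sub_C hq]
    exact Nat.succ_le_succ (ih hpairwise hq hqroot hcard)

end Polynomial

namespace Quaternion

theorem normSq_eq_re_sq_add_normSq_im (a : ℍ[ℝ]) : normSq a = a.re ^ 2 + normSq a.im := by
  simp only [normSq_def', re_im, imI_im, imJ_im, imK_im]
  ring

theorem _root_.autEquiv_iff {a b : ℍ[ℝ]} :
    AutEquiv a b ↔ a.re = b.re ∧ normSq a = normSq b := by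
  rw [AutEquiv, normSq_eq_re_sq_add_normSq_im a, normSq_eq_re_sq_add_normSq_im b,
    normSq_eq_norm_mul_self a.im, normSq_eq_norm_mul_self b.im]
  refine and_congr_right fun hre => ?_
  rw [hre, add_right_inj, mul_self_inj (norm_nonneg _) (norm_nonneg _)]

theorem _root_.AutEquiv.symm {a b : ℍ[ℝ]} (h : AutEquiv a b) : AutEquiv b a :=
  ⟨h.1.symm, h.2.symm⟩

theorem re_mul_comm (a b : ℍ[ℝ]) : (a * b).re = (b * a).re := by
  simp only [re_mul]
  ring

theorem _root_.IsConj.autEquiv {a b : ℍ[ℝ]} (h : IsConj a b) : AutEquiv a b := by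
  obtain ⟨c, hc, rfl⟩ := GroupWithZero.isConj_iff₀.mp h
  have hc' : normSq c ≠ 0 := normSq_eq_zero.not.mpr hc
  refine autEquiv_iff.mpr ⟨?_, ?_⟩
  · rw [re_mul_comm, ← mul_assoc, inv_mul_cancel₀ hc, one_mul]
  · rw [map_mul, map_mul, map_inv₀]
    field_simp

noncomputable def charpoly (a : ℍ[ℝ]) : ℝ[X] := X ^ 2 - C (2 * a.re) * X + C (normSq a)

theorem aeval_charpoly (a z : ℍ[ℝ]) :
    aeval z (charpoly a) = z ^ 2 - (a + star a) * z + star a * a := by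
  simp [charpoly, self_add_star', star_mul_self, algebraMap_def]

theorem aeval_charpoly_eq_zero_iff {a z : ℍ[ℝ]} : aeval z (charpoly a) = 0 ↔ AutEquiv z a := by
  have hsmul : aeval z (charpoly a) = (2 * (z.re - a.re)) • z + ↑(normSq a - normSq z) := by
    rw [aeval_charpoly]
    ext <;> simp [sq, normSq_def'] <;> ring
  rw [hsmul, autEquiv_iff]
  constructor
  · intro h
    have hre := congrArg (·.re) h
    have him := congrArg (·.im) h
    simp only [re_add, re_smul, re_coe, re_zero, smul_eq_mul] at hre
    simp only [im_add, im_smul, im_coe, im_zero, add_zero, smul_eq_zero] at him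
    have hre_eq : z.re = a.re := by
      rcases him with hd | him
      · linarith
      · rw [normSq_eq_re_sq_add_normSq_im z, normSq_eq_re_sq_add_normSq_im a, him,
          map_zero] at hre
        nlinarith [normSq_nonneg (a := a.im)]
    refine ⟨hre_eq, ?_⟩
    rw [hre_eq, sub_self, mul_zero, zero_mul, zero_add] at hre
    linarith
  · rintro ⟨hre, hnormSq⟩
    simp [hre, hnormSq]

theorem map_charpoly (a : ℍ[ℝ]) :
    (charpoly a).map (algebraMap ℝ ℍ[ℝ]) = (X - C (star a)) * (X - C a) := by
  have hre : algebraMap ℝ ℍ[ℝ] (2 * a.re) = a + star a := (self_add_star' a).symm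
  have hnormSq : algebraMap ℝ ℍ[ℝ] (normSq a) = star a * a := (star_mul_self a).symm
  rw [charpoly, Polynomial.map_add, Polynomial.map_sub, Polynomial.map_mul, Polynomial.map_pow,
    map_X, map_C, map_C, hre, hnormSq, C_add, C_mul, add_mul, ← (commute_X (C a)).eq]
  noncomm_ring

theorem sub_mul_inv_eq_star_of_autEquiv {a b : ℍ[ℝ]} (hab : a ≠ b) (h : AutEquiv a b) :
    (b - a) * b * (b - a)⁻¹ = star a := by
  have hchar : (b - a) * b - star a * (b - a) = 0 := by
    rw [← aeval_charpoly_eq_zero_iff.mpr h.symm, aeval_charpoly]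
    noncomm_ring
  rw [mul_inv_eq_iff_eq_mul₀ (sub_ne_zero.mpr hab.symm), sub_eq_zero.mp hchar]

theorem exists_eq_mul_X_sub_C_star_mul_X_sub_C {p : ℍ[ℝ][X]} {a b : ℍ[ℝ]} (hab : a ≠ b)
    (h : AutEquiv a b) (ha : p.eval a = 0) (hb : p.eval b = 0) :
    ∃ r, p = r * (X - C (star a)) * (X - C a) := by
  obtain ⟨q, rfl⟩ := exists_eq_mul_X_sub_C_of_eval_eq_zero ha
  have hq : q.eval (star a) = 0 := by
    rw [← sub_mul_inv_eq_star_of_autEquiv hab h]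
    exact eval_conj_eq_zero_of_eval_mul_X_sub_C_eq_zero hab.symm hb
  obtain ⟨r, rfl⟩ := exists_eq_mul_X_sub_C_of_eval_eq_zero hq
  exact ⟨r, rfl⟩

theorem eval_eq_zero_of_eval_mul_X_sub_C_star_mul_X_sub_C_eq_zero {r : ℍ[ℝ][X]} {a z : ℍ[ℝ]}
    (hz : ¬AutEquiv z a) (h : (r * (X - C (star a)) * (X - C a)).eval z = 0) : r.eval z = 0 := by
  rw [mul_assoc, ← map_charpoly, eval_mul_map_algebraMap] at h
  exact (mul_eq_zero.mp h).resolve_right (aeval_charpoly_eq_zero_iff.not.mpr hz)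

theorem card_le_natDegree_of_eval_eq_zero {s : Finset ℍ[ℝ]}
    (hs : ∀ a ∈ s, ∀ b ∈ s, ∀ c ∈ s, a ≠ b → a ≠ c → b ≠ c → ¬(AutEquiv a b ∧ AutEquiv b c))
    {p : ℍ[ℝ][X]} (hp : p ≠ 0) (hroot : ∀ z ∈ s, p.eval z = 0) : #s ≤ p.natDegree := by
  classical
  induction s using Finset.strongInduction generalizing p with
  | H s ih =>
  by_cases hpair : ∃ a ∈ s, ∃ b ∈ s, a ≠ b ∧ AutEquiv a b
  · obtain ⟨a, ha, b, hb, hab, hequiv⟩ := hpair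
    obtain ⟨r, rfl⟩ :=
      exists_eq_mul_X_sub_C_star_mul_X_sub_C hab hequiv (hroot a ha) (hroot b hb)
    have hr' : r * (X - C (star a)) ≠ 0 := left_ne_zero_of_mul hp
    have hr : r ≠ 0 := left_ne_zero_of_mul hr'
    have hb' : b ∈ s.erase a := mem_erase.mpr ⟨hab.symm, hb⟩
    have hts : (s.erase a).erase b ⊂ s := (erase_ssubset hb').trans (erase_ssubset ha)
    have hrroot : ∀ z ∈ (s.erase a).erase b, r.eval z = 0 := by
      intro z hz
      obtain ⟨hzb, hza, hzs⟩ : z ≠ b ∧ z ≠ a ∧ z ∈ s := by simpa only [mem_erase] using hz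
      refine eval_eq_zero_of_eval_mul_X_sub_C_star_mul_X_sub_C_eq_zero (fun hza' => ?_)
        (hroot z hzs)
      exact hs b hb a ha z hzs hab.symm hzb.symm hza.symm ⟨hequiv.symm, hza'.symm⟩
    have hle := ih _ hts (fun a ha b hb c hc =>
      hs a (hts.subset ha) b (hts.subset hb) c (hts.subset hc)) hr hrroot
    rw [card_erase_of_mem hb', card_erase_of_mem ha] at hle
    rw [natDegree_mul_X_sub_C hr', natDegree_mul_X_sub_C hr]
    omega
  · push Not at hpair
    exact card_le_natDegree_of_pairwise_not_isConj
      (fun a ha b hb hab hconj => hpair a ha b hb hab hconj.autEquiv) hp hroot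

end Quaternion

/-- Uniqueness of one-sided quaternion interpolation polynomials: if the nodes are
pairwise distinct and no three of them are automorphically equivalent, then two
coefficient sequences agreeing at all nodes are equal. -/
theorem onesided_quaternion_interpolation_unique (n : ℕ) (x : Fin n → ℍ[ℝ])
    (hdist : Function.Injective x)
    (hthree : ∀ l m r : Fin n, l ≠ m → l ≠ r → m ≠ r →
      ¬(AutEquiv (x l) (x m) ∧ AutEquiv (x m) (x r)))
    (a b : Fin n → ℍ[ℝ])
    (h : ∀ m : Fin n, ∑ ℓ : Fin n, a ℓ * (x m) ^ (ℓ : ℕ)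
        = ∑ ℓ : Fin n, b ℓ * (x m) ^ (ℓ : ℕ)) :
    ∀ ℓ : Fin n, a ℓ = b ℓ := by
  classical
  set p : ℍ[ℝ][X] := ∑ ℓ : Fin n, C (a ℓ - b ℓ) * X ^ (ℓ : ℕ)
  have hroot : ∀ z ∈ univ.image x, p.eval z = 0 := by
    simp [p, eval_finsetSum, sub_mul, Finset.sum_sub_distrib, h]
  have hnodes : ∀ u ∈ univ.image x, ∀ v ∈ univ.image x, ∀ w ∈ univ.image x,
      u ≠ v → u ≠ w → v ≠ w → ¬(AutEquiv u v ∧ AutEquiv v w) := by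
    simp only [mem_image, mem_univ, true_and]
    rintro _ ⟨l, rfl⟩ _ ⟨m, rfl⟩ _ ⟨r, rfl⟩ hlm hlr hmr
    exact hthree l m r (ne_of_apply_ne x hlm) (ne_of_apply_ne x hlr) (ne_of_apply_ne x hmr)
  have hp : p = 0 := by
    by_contra hp
    have hcard := card_le_natDegree_of_eval_eq_zero hnodes hp hroot
    rw [card_image_of_injective _ hdist, card_univ, Fintype.card_fin] at hcard
    exact ((natDegree_lt_iff_degree_lt hp).mpr (degree_sum_fin_lt _)).not_ge hcard
  intro ℓ
  have hcoeff := congrArg (coeff · ℓ) hp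
  simp only [p, finsetSum_coeff, coeff_C_mul_X_pow, Fin.val_inj, Finset.sum_ite_eq, mem_univ,
    if_true, coeff_zero] at hcoeff
  exact sub_eq_zero.mp hcoeff
end

section
/- Let x₀, …, x_{n−1} ∈ ℍ and suppose that for every choice of values y₀, …, y_{n−1} ∈ ℍ there exist coefficients a₀, …, a_{n−1} ∈ ℍ with Σ_{ℓ=0}^{n−1} a_ℓ·x_m^ℓ = y_m for all m = 0, …, n−1. Then the points x₀, …, x_{n−1} are pairwise distinct and no three of them are automorphically equivalent. -/
/-!
On an automorphic equivalence class `{q : q.re = t, |q|² = N}` every quaternion satisfies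
`q² = 2t q - N`, so each power `q^ℓ` equals `α_ℓ + β_ℓ q` with real `α_ℓ, β_ℓ` depending only on
the class. Hence a one-sided polynomial `∑ a_ℓ q^ℓ` agrees on the whole class with an affine map
`q ↦ A + B q`. If it takes the same value at two distinct points of the class then `B = 0`, as `ℍ`
has no zero divisors, so it is constant on the class; the data `1, 0, 0` at three equivalent
nodes therefore cannot be interpolated.
-/

open Quaternion

section QuadraticPowers

variable {R A : Type*} [CommRing R] [Ring A] [Algebra R A]

/-- `X ^ k ≡ (quadraticPowCoeffs t N k).1 + (quadraticPowCoeffs t N k).2 * X` modulo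
`X ^ 2 - t * X + N`. -/
def quadraticPowCoeffs (t N : R) : ℕ → R × R
  | 0 => (1, 0)
  | k + 1 => (-N * (quadraticPowCoeffs t N k).2,
      (quadraticPowCoeffs t N k).1 + t * (quadraticPowCoeffs t N k).2)

theorem pow_eq_of_mul_self_eq {t N : R} {a : A} (ha : a * a = t • a - N • 1) (k : ℕ) :
    a ^ k = (quadraticPowCoeffs t N k).1 • 1 + (quadraticPowCoeffs t N k).2 • a := by
  induction k with
  | zero => simp [quadraticPowCoeffs]
  | succ k ih =>
    rw [pow_succ, ih, add_mul, smul_mul_assoc, smul_mul_assoc, one_mul, ha,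
      quadraticPowCoeffs]
    module

theorem sum_mul_pow_eq_of_mul_self_eq {n : ℕ} {t N : R} {a : A} (ha : a * a = t • a - N • 1)
    (c : Fin n → A) :
    ∑ ℓ : Fin n, c ℓ * a ^ (ℓ : ℕ) =
      (∑ ℓ : Fin n, (quadraticPowCoeffs t N ℓ).1 • c ℓ) +
        (∑ ℓ : Fin n, (quadraticPowCoeffs t N ℓ).2 • c ℓ) * a := by
  rw [Finset.sum_mul, ← Finset.sum_add_distrib]
  refine Finset.sum_congr rfl fun ℓ _ => ?_
  rw [pow_eq_of_mul_self_eq ha, mul_add, mul_smul_comm, mul_smul_comm, smul_mul_assoc, mul_one]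

end QuadraticPowers

theorem Quaternion.mul_self_eq_smul_sub {R : Type*} [CommRing R] (a : ℍ[R]) :
    a * a = (2 * a.re) • a - normSq a • 1 := by
  ext <;> simp [normSq_def'] <;> ring

theorem Quaternion.normSq_eq_re_sq_add_norm_im_sq (a : ℍ[ℝ]) :
    normSq a = a.re ^ 2 + ‖a.im‖ ^ 2 := by
  rw [sq ‖a.im‖, ← normSq_eq_norm_mul_self, normSq_def', normSq_def']
  simp only [re_im, imI_im, imJ_im, imK_im]
  ring

theorem AutEquiv.normSq_eq {a b : ℍ[ℝ]} (h : AutEquiv a b) : normSq a = normSq b := by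
  rw [normSq_eq_re_sq_add_norm_im_sq, normSq_eq_re_sq_add_norm_im_sq, h.1, h.2]

theorem exists_forall_autEquiv_sum_mul_pow_eq {n : ℕ} (c : Fin n → ℍ[ℝ]) (q : ℍ[ℝ]) :
    ∃ A B : ℍ[ℝ], ∀ p, AutEquiv q p → ∑ ℓ : Fin n, c ℓ * p ^ (ℓ : ℕ) = A + B * p := by
  refine ⟨_, _, fun p hp =>
    sum_mul_pow_eq_of_mul_self_eq (t := 2 * q.re) (N := normSq q) ?_ c⟩
  rw [mul_self_eq_smul_sub p, ← hp.1, ← hp.normSq_eq]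

/-- If every choice of values can be interpolated at the nodes `x₀, …, x_{n−1}` by a
one-sided quaternion polynomial of degree `< n`, then the nodes are pairwise distinct
and no three of them are automorphically equivalent. -/
theorem onesided_quaternion_interpolation_necessary (n : ℕ) (x : Fin n → ℍ[ℝ])
    (h : ∀ y : Fin n → ℍ[ℝ],
      ∃ a : Fin n → ℍ[ℝ], ∀ m : Fin n, ∑ ℓ : Fin n, a ℓ * (x m) ^ (ℓ : ℕ) = y m) :
    Function.Injective x ∧
      ∀ l m r : Fin n, l ≠ m → l ≠ r → m ≠ r →
        ¬(AutEquiv (x l) (x m) ∧ AutEquiv (x m) (x r)) := by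
  have hinj : Function.Injective x := Function.surjective_comp_right_iff_injective.mp
    fun y => let ⟨a, ha⟩ := h y; ⟨fun q => ∑ ℓ : Fin n, a ℓ * q ^ (ℓ : ℕ), funext ha⟩
  refine ⟨hinj, ?_⟩
  rintro l m r hlm hlr hmr ⟨hl_m, hm_r⟩
  obtain ⟨a, ha⟩ := h (Pi.single l 1)
  obtain ⟨A, B, haffine⟩ := exists_forall_autEquiv_sum_mul_pow_eq a (x l)
  have hl := (haffine (x l) ⟨rfl, rfl⟩).symm.trans (ha l)
  have hm := (haffine (x m) hl_m).symm.trans (ha m)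
  have hr := (haffine (x r) ⟨hl_m.1.trans hm_r.1, hl_m.2.trans hm_r.2⟩).symm.trans (ha r)
  simp only [Pi.single_eq_same, Pi.single_eq_of_ne hlm.symm, Pi.single_eq_of_ne hlr.symm]
    at hl hm hr
  have hB : B = 0 := by
    by_contra hB
    exact hmr (hinj (mul_left_cancel₀ hB (add_left_cancel (hm.trans hr.symm))))
  rw [hB, zero_mul, add_zero] at hl hm
  exact one_ne_zero (hl.symm.trans hm)
end

section
/- Let f and g be multivariate polynomials with real coefficients (in any finite set of variables). Then the total degree of f² + g² equals the maximum of the total degrees of f² and g², which equals twice the maximum of the total degrees of f and g: deg(f² + g²) = 2·max(deg f, deg g). In particular, unlike over ℂ, the top-degree terms of f² and g² cannot cancel in f² + g². -/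
/-!
Order monomials degree-lexicographically, so that the total degree of a polynomial is the degree
of its leading monomial. Leading coefficients of squares are squares, hence nonnegative, and two
polynomials with nonnegative leading coefficients cannot cancel in their sum: if their leading
monomials agree, the leading coefficient of the sum is a sum of a positive and a nonnegative number.
-/

namespace MonomialOrder

variable {σ R : Type*} {m : MonomialOrder σ}

theorem degree_add_of_leadingCoeff_nonneg [CommSemiring R] [PartialOrder R]
    [IsOrderedCancelAddMonoid R] {f g : MvPolynomial σ R}
    (hf : 0 ≤ m.leadingCoeff f) (hg : 0 ≤ m.leadingCoeff g) :
    m.toSyn (m.degree (f + g)) = m.toSyn (m.degree f) ⊔ m.toSyn (m.degree g) := by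
  by_cases hfg : m.degree f = m.degree g
  swap
  · exact degree_add_of_ne hfg
  by_cases hf0 : f = 0
  · simp [hf0]
  refine le_antisymm degree_add_le ?_
  rw [hfg, max_self]
  apply le_degree
  have hlc : 0 < m.leadingCoeff f := hf.lt_of_ne' (m.leadingCoeff_ne_zero_iff.mpr hf0)
  rw [MvPolynomial.mem_support_iff, MvPolynomial.coeff_add, ← hfg]
  exact (add_pos_of_pos_of_nonneg hlc (hfg ▸ hg)).ne'

end MonomialOrder

namespace MvPolynomial

variable {σ R : Type*}

theorem totalDegree_add_of_degLex_leadingCoeff_nonneg [LinearOrder σ] [WellFoundedGT σ]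
    [CommSemiring R] [PartialOrder R] [IsOrderedCancelAddMonoid R] {f g : MvPolynomial σ R}
    (hf : 0 ≤ MonomialOrder.degLex.leadingCoeff f) (hg : 0 ≤ MonomialOrder.degLex.leadingCoeff g) :
    (f + g).totalDegree = max f.totalDegree g.totalDegree := by
  simp only [← degree_degLexDegree]
  have h := congrArg (fun x => (ofDegLex x).degree)
    (MonomialOrder.degree_add_of_leadingCoeff_nonneg hf hg)
  exact h.trans (Finsupp.DegLex.monotone_degree.map_max)

theorem totalDegree_pow_of_isReduced [CommSemiring R] [IsReduced R] (f : MvPolynomial σ R) (n : ℕ) :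
    (f ^ n).totalDegree = n * f.totalDegree := by
  obtain ⟨_, _⟩ := exists_wellFoundedGT σ
  simp only [← degree_degLexDegree, MonomialOrder.degree_pow, map_nsmul, smul_eq_mul]

end MvPolynomial

theorem totalDegree_sq_add_sq_general {σ : Type*}
    (f g : MvPolynomial σ ℝ) :
    (f ^ 2 + g ^ 2).totalDegree
        = max (f ^ 2).totalDegree (g ^ 2).totalDegree ∧
      max (f ^ 2).totalDegree (g ^ 2).totalDegree
        = 2 * max f.totalDegree g.totalDegree := by
  obtain ⟨_, _⟩ := exists_wellFoundedGT σ
  have hsq (p : MvPolynomial σ ℝ) : 0 ≤ MonomialOrder.degLex.leadingCoeff (p ^ 2) := by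
    rw [MonomialOrder.leadingCoeff_pow]
    exact sq_nonneg _
  refine ⟨MvPolynomial.totalDegree_add_of_degLex_leadingCoeff_nonneg (hsq f) (hsq g), ?_⟩
  rw [MvPolynomial.totalDegree_pow_of_isReduced, MvPolynomial.totalDegree_pow_of_isReduced,
    Nat.mul_max_mul_left]

/-- For multivariate real polynomials, the total degree of `f² + g²` equals the maximum
of the total degrees of `f²` and `g²`, which is twice the maximum of the total degrees
of `f` and `g`: the top-degree terms of `f²` and `g²` cannot cancel. -/
theorem totalDegree_sq_add_sq {σ : Type*} [Fintype σ]
    (f g : MvPolynomial σ ℝ) :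
    (f ^ 2 + g ^ 2).totalDegree
        = max (f ^ 2).totalDegree (g ^ 2).totalDegree ∧
      max (f ^ 2).totalDegree (g ^ 2).totalDegree
        = 2 * max f.totalDegree g.totalDegree :=
  totalDegree_sq_add_sq_general f g
end

section
/- Every quadruple of real four-variate polynomials corresponds to a quaternion polynomial: for any P₀, P₁, P₂, P₃ ∈ ℝ[X₀, X₁, X₂, X₃], the function f : ℍ → ℍ defined by f(x₀ + i·x₁ + j·x₂ + k·x₃) = P₀(x₀,…,x₃) + i·P₁(x₀,…,x₃) + j·P₂(x₀,…,x₃) + k·P₃(x₀,…,x₃) belongs to ℍ₁[X], the smallest subring of the ring of all functions ℍ → ℍ (with pointwise addition and pointwise multiplication) that contains the identity function and all constant functions. -/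
/-!
The conjugations `x ↦ u x u` by `u = i, j, k` sum with `x` to `-2 x̄`, so quaternion conjugation
lies in `ℍ₁[X]`. Hence so does `x ↦ Re (c x) = (c x + x̄ c̄) / 2` for every constant `c`, and each
real coordinate of `x` is of this form. Real polynomials in the coordinates then lie in `ℍ₁[X]`
because it is a subring containing the constants.
-/

open Quaternion

/-- `ℍ₁[X]`: the smallest subring of the ring of all functions `ℍ → ℍ` (with pointwise
operations) containing the identity mapping and all constant mappings. -/
def H1 : Subring (ℍ[ℝ] → ℍ[ℝ]) :=
  Subring.closure ({id} ∪ { f | ∃ a : ℍ[ℝ], f = Function.const ℍ[ℝ] a })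

lemma const_mem_H1 (a : ℍ[ℝ]) : Function.const ℍ[ℝ] a ∈ H1 :=
  Subring.subset_closure (Or.inr ⟨a, rfl⟩)

lemma id_mem_H1 : (id : ℍ[ℝ] → ℍ[ℝ]) ∈ H1 :=
  Subring.subset_closure (Or.inl rfl)

lemma star_eq_neg_half_mul_sum_conj (x : ℍ[ℝ]) :
    star x = ((-2⁻¹ : ℝ) : ℍ[ℝ]) * (x + qi * x * qi + qj * x * qj + qk * x * qk) := by
  rw [coe_mul_eq_smul]
  ext <;> simp [re_mul, imI_mul, imJ_mul, imK_mul] <;> simp [qi, qj, qk] <;> ring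

lemma star_mem_H1 : (star : ℍ[ℝ] → ℍ[ℝ]) ∈ H1 := by
  have hconj (u : ℍ[ℝ]) : (fun x => u * x * u) ∈ H1 :=
    H1.mul_mem (H1.mul_mem (const_mem_H1 u) id_mem_H1) (const_mem_H1 u)
  rw [funext star_eq_neg_half_mul_sum_conj]
  exact H1.mul_mem (const_mem_H1 _)
    (H1.add_mem (H1.add_mem (H1.add_mem id_mem_H1 (hconj qi)) (hconj qj)) (hconj qk))

lemma re_mul_mem_H1 (c : ℍ[ℝ]) : (fun x : ℍ[ℝ] => (((c * x).re : ℝ) : ℍ[ℝ])) ∈ H1 := by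
  have h (x : ℍ[ℝ]) :
      (((c * x).re : ℝ) : ℍ[ℝ]) = ((2⁻¹ : ℝ) : ℍ[ℝ]) * (c * x + star x * star c) := by
    rw [← star_mul, self_add_star', ← coe_mul, inv_mul_cancel_left₀ two_ne_zero]
  rw [funext h]
  exact H1.mul_mem (const_mem_H1 _) (H1.add_mem (H1.mul_mem (const_mem_H1 c) id_mem_H1)
    (H1.mul_mem star_mem_H1 (const_mem_H1 (star c))))

lemma coords_eq_re_mul (x : ℍ[ℝ]) (n : Fin 4) :
    ![x.re, x.imI, x.imJ, x.imK] n = (![1, -qi, -qj, -qk] n * x).re := by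
  fin_cases n <;> simp [re_mul] <;> simp [qi, qj, qk]

lemma coord_mem_H1 (n : Fin 4) :
    (fun x : ℍ[ℝ] => ((![x.re, x.imI, x.imJ, x.imK] n : ℝ) : ℍ[ℝ])) ∈ H1 := by
  simpa only [coords_eq_re_mul] using re_mul_mem_H1 (![1, -qi, -qj, -qk] n)

lemma eval_coords_mem_H1 (P : MvPolynomial (Fin 4) ℝ) :
    (fun x : ℍ[ℝ] => ((MvPolynomial.eval ![x.re, x.imI, x.imJ, x.imK] P : ℝ) : ℍ[ℝ])) ∈ H1 := by
  induction P using MvPolynomial.induction_on with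
  | C a =>
    simp only [MvPolynomial.eval_C]
    exact const_mem_H1 a
  | add p q hp hq =>
    simp only [map_add, coe_add]
    exact H1.add_mem hp hq
  | mul_X p n hp =>
    simp only [map_mul, MvPolynomial.eval_X, coe_mul]
    exact H1.mul_mem hp (coord_mem_H1 n)

/-- Every quadruple of real four-variate polynomials corresponds to a quaternion
polynomial: the function sending `x = x₀ + i x₁ + j x₂ + k x₃` to
`P₀(x₀,…,x₃) + i P₁(x₀,…,x₃) + j P₂(x₀,…,x₃) + k P₃(x₀,…,x₃)` lies in `ℍ₁[X]`. -/
theorem quadruple_of_polynomials_is_quaternion_polynomial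
    (P₀ P₁ P₂ P₃ : MvPolynomial (Fin 4) ℝ) :
    (fun x : ℍ[ℝ] =>
        ((MvPolynomial.eval ![x.re, x.imI, x.imJ, x.imK] P₀ : ℝ) : ℍ[ℝ])
        + qi * ((MvPolynomial.eval ![x.re, x.imI, x.imJ, x.imK] P₁ : ℝ) : ℍ[ℝ])
        + qj * ((MvPolynomial.eval ![x.re, x.imI, x.imJ, x.imK] P₂ : ℝ) : ℍ[ℝ])
        + qk * ((MvPolynomial.eval ![x.re, x.imI, x.imJ, x.imK] P₃ : ℝ) : ℍ[ℝ]))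
      ∈ H1 := by
  have const_mul_mem (u : ℍ[ℝ]) (P : MvPolynomial (Fin 4) ℝ) :=
    H1.mul_mem (const_mem_H1 u) (eval_coords_mem_H1 P)
  exact H1.add_mem (H1.add_mem (H1.add_mem (eval_coords_mem_H1 P₀)
    (const_mul_mem qi P₁)) (const_mul_mem qj P₂)) (const_mul_mem qk P₃)
end
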